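/- The pure virtual twin group PVT_4 is isomorphic to the free product (ℤ × ℤ) * (ℤ × ℤ) * (ℤ × ℤ). -/

import Mathlib

namespace VTG

open scoped commutatorElement

abbrev Gen (n : ℕ) := Fin (n-1) ⊕ Fin (n-1)

/-- The free-group letter corresponding to the generator `s_i`. -/
def fs {n : ℕ} (i : Fin (n-1)) : FreeGroup (Gen n) := FreeGroup.of (Sum.inl i)

/-- The free-group letter corresponding to the generator `ρ_i`. -/
def fr {n : ℕ} (i : Fin (n-1)) : FreeGroup (Gen n) := FreeGroup.of (Sum.inr i)

/-- The defining relations of the virtual twin group `VT_n`. -/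
def vtRels (n : ℕ) : Set (FreeGroup (Gen n)) :=
  { w | (∃ i : Fin (n-1), w = fs i * fs i) ∨
        (∃ i j : Fin (n-1), (i : ℕ) + 2 ≤ (j : ℕ) ∧ w = ⁅fs i, fs j⁆) ∨
        (∃ i : Fin (n-1), w = fr i * fr i) ∨
        (∃ i j : Fin (n-1), (i : ℕ) + 2 ≤ (j : ℕ) ∧ w = ⁅fr i, fr j⁆) ∨
        (∃ i j : Fin (n-1), (j : ℕ) = (i : ℕ) + 1 ∧
          w = fr i * fr j * fr i * (fr j * fr i * fr j)⁻¹) ∨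
        (∃ i j : Fin (n-1), (i : ℕ) + 2 ≤ (j : ℕ) ∧ (w = ⁅fr i, fs j⁆ ∨ w = ⁅fs i, fr j⁆)) ∨
        (∃ i j : Fin (n-1), (j : ℕ) = (i : ℕ) + 1 ∧
          w = fr i * fr j * fs i * (fs j * fr i * fr j)⁻¹) }

/-- The virtual twin group `VT_n`. -/
abbrev VT (n : ℕ) := PresentedGroup (vtRels n)

/-- The generator `s_{k+1}` (1-based numbering) of `VT_n`. -/
def sg {n : ℕ} (k : ℕ) (h : k < n - 1) : VT n := PresentedGroup.of (Sum.inl ⟨k, h⟩)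

/-- The generator `ρ_{k+1}` (1-based numbering) of `VT_n`. -/
def rg {n : ℕ} (k : ℕ) (h : k < n - 1) : VT n := PresentedGroup.of (Sum.inr ⟨k, h⟩)

/-- The transposition `(i, i+1)` in the symmetric group on `n` letters. -/
def tr {n : ℕ} (i : Fin (n - 1)) : Equiv.Perm (Fin n) :=
  Equiv.swap ⟨i.1, by have := i.2; omega⟩ ⟨i.1 + 1, by have := i.2; omega⟩

lemma swap_commute {α : Type*} [DecidableEq α] {a b c d : α}
    (h1 : a ≠ c) (h2 : a ≠ d) (h3 : b ≠ c) (h4 : b ≠ d) :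
    Commute (Equiv.swap a b) (Equiv.swap c d) := by
  apply Equiv.Perm.Disjoint.commute
  intro x
  by_cases hxa : x = a
  · subst hxa; right; exact Equiv.swap_apply_of_ne_of_ne h1 h2
  · by_cases hxb : x = b
    · subst hxb; right; exact Equiv.swap_apply_of_ne_of_ne h3 h4
    · left; exact Equiv.swap_apply_of_ne_of_ne hxa hxb

lemma tr_commute {n : ℕ} {i j : Fin (n-1)} (h : (i : ℕ) + 2 ≤ (j : ℕ)) :
    Commute (tr (n := n) i) (tr j) := by
  apply swap_commute <;>
    (intro hEq; apply_fun Fin.val at hEq; simp only [] at hEq; omega)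

lemma tr_braid {n : ℕ} {i j : Fin (n-1)} (h : (j : ℕ) = (i : ℕ) + 1) :
    tr (n := n) i * tr j * tr i = tr j * tr i * tr j := by
  have hj2 : (i : ℕ) + 2 ≤ n := by have := j.2; omega
  set a : Fin n := ⟨i.1, by omega⟩ with ha
  set b : Fin n := ⟨i.1 + 1, by omega⟩ with hb
  set c : Fin n := ⟨i.1 + 2, by omega⟩ with hc
  have hab : a ≠ b := by simp [ha, hb, Fin.ext_iff]
  have hbc : b ≠ c := by simp [hb, hc, Fin.ext_iff]
  have hac : a ≠ c := by simp [ha, hc, Fin.ext_iff]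
  have h1 : tr (n := n) i = Equiv.swap a b := rfl
  have h2 : tr (n := n) j = Equiv.swap b c := by
    unfold tr
    congr 1 <;> exact Fin.ext (by simp [hb, hc, h])
  rw [h1, h2]
  have L := Equiv.swap_mul_swap_mul_swap (x := c) (y := b) (z := a)
    (hbc.symm) (hac.symm)
  have R := Equiv.swap_mul_swap_mul_swap (x := a) (y := b) (z := c)
    (hab) (hac)
  calc Equiv.swap a b * Equiv.swap b c * Equiv.swap a b
      = Equiv.swap b a * Equiv.swap c b * Equiv.swap b a := by
        rw [Equiv.swap_comm a b, Equiv.swap_comm b c]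
    _ = Equiv.swap a c := L
    _ = Equiv.swap c a := Equiv.swap_comm a c
    _ = Equiv.swap b c * Equiv.swap a b * Equiv.swap b c := R.symm

lemma tr_sq {n : ℕ} (i : Fin (n-1)) : tr (n := n) i * tr i = 1 := Equiv.swap_mul_self _ _

/-- The canonical projection `π : VT_n → S_n`. -/
def perm (n : ℕ) : VT n →* Equiv.Perm (Fin n) :=
  PresentedGroup.toGroup (f := Sum.elim tr tr) (by
    rintro w (⟨i, rfl⟩ | ⟨i, j, hij, rfl⟩ | ⟨i, rfl⟩ | ⟨i, j, hij, rfl⟩ |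
      ⟨i, j, hij, rfl⟩ | ⟨i, j, hij, (rfl | rfl)⟩ | ⟨i, j, hij, rfl⟩)
    · simp [fs, tr_sq]
    · rw [map_commutatorElement]
      simp only [fs, FreeGroup.lift_apply_of, Sum.elim_inl]
      exact commutatorElement_eq_one_iff_commute.mpr (tr_commute hij)
    · simp [fr, tr_sq]
    · rw [map_commutatorElement]
      simp only [fr, FreeGroup.lift_apply_of, Sum.elim_inr]
      exact commutatorElement_eq_one_iff_commute.mpr (tr_commute hij)
    · have h1 : FreeGroup.lift (Sum.elim tr tr) (fr i * fr j * fr (n := n) i)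
          = tr i * tr j * tr i := by simp [fr]
      have h2 : FreeGroup.lift (Sum.elim tr tr) (fr j * fr i * fr (n := n) j)
          = tr j * tr i * tr j := by simp [fr]
      rw [map_mul, map_inv, h1, h2, tr_braid hij, mul_inv_cancel]
    · rw [map_commutatorElement]
      simp only [fr, fs, FreeGroup.lift_apply_of, Sum.elim_inl, Sum.elim_inr]
      exact commutatorElement_eq_one_iff_commute.mpr (tr_commute hij)
    · rw [map_commutatorElement]
      simp only [fr, fs, FreeGroup.lift_apply_of, Sum.elim_inl, Sum.elim_inr]
      exact commutatorElement_eq_one_iff_commute.mpr (tr_commute hij)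
    · have h1 : FreeGroup.lift (Sum.elim tr tr) (fr i * fr j * fs (n := n) i)
          = tr i * tr j * tr i := by simp [fr, fs]
      have h2 : FreeGroup.lift (Sum.elim tr tr) (fs j * fr i * fr (n := n) j)
          = tr j * tr i * tr j := by simp [fr, fs]
      rw [map_mul, map_inv, h1, h2, tr_braid hij, mul_inv_cancel])

end VTG

/-!
`VT₄` is a semidirect product `K ⋊ S₄`, where `K = ℤ² * ℤ² * ℤ²` has a generator `λᵢⱼ` for
every ordered pair `i ≠ j` (with `λⱼᵢ = λᵢⱼ⁻¹`), each factor being generated by `λᵢⱼ` and `λₖₗ`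
for complementary pairs `{i, j}`, `{k, l}`, and `S₄` permutes the indices. The assignment
`sᵢ ↦ (λ_{i,i+1}, (i i+1))`, `ρᵢ ↦ (1, (i i+1))` respects the defining relations of `VT₄`.
The `ρᵢ` satisfy the Coxeter relations of `S₄`, so `σ ↦ ρ_σ` is a homomorphism `S₄ → VT₄`
(the Coxeter presentation of `S₄` is proved by enumerating cosets along `S₁ ⊂ S₂ ⊂ S₃ ⊂ S₄`);
sending `λ_{σ 0, σ 1}` to `ρ_σ (s₀ ρ₀) ρ_σ⁻¹` is well defined because `ρ₂` commutes with `s₀ ρ₀`,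
and together these give the inverse map. The projection `VT₄ → S₄` corresponds to the projection
of the semidirect product, so its kernel `PVT₄` is `K`.
-/

open Equiv Fin.NatCast Monoid

section CoxeterPresentation

def adj (i : Fin 3) : Perm (Fin 4) := swap i.castSucc i.succ

lemma closure_range_adj : Submonoid.closure (Set.range adj) = ⊤ :=
  Perm.mclosure_swap_castSucc_succ 3

variable {G : Type*} [Group G] {r : Fin 3 → G}

structure IsCoxeterA3 (r : Fin 3 → G) : Prop where
  mul_self : ∀ i, r i * r i = 1
  braid₀₁ : r 0 * r 1 * r 0 = r 1 * r 0 * r 1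
  braid₁₂ : r 1 * r 2 * r 1 = r 2 * r 1 * r 2
  comm₀₂ : r 0 * r 2 = r 2 * r 0

lemma isCoxeterA3_adj : IsCoxeterA3 adj := ⟨by decide, by decide, by decide, by decide⟩

namespace CoxeterA3

def wordProd (r : Fin 3 → G) (l : List (Fin 3)) : G := (l.map r).prod

/-- The word `a, a+1, …, k-1`. Its permutation is a cycle taking `k` to `a`; for `a ≤ k` these
cycles are coset representatives of the stabiliser of `k` in the permutations of `{0, …, k}`. -/
def cosetWord (k : ℕ) (a : Fin 4) : List (Fin 3) :=
  (![[0, 1, 2], [1, 2], [2], []] a).filter (·.val < k)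

/-- What is left over, on the right, when `r i` is pushed through the coset word of `a`. -/
def carry (i : Fin 3) (a : Fin 4) : List (Fin 3) :=
  if i.val + 1 < a.val then [i] else if a.val < i.val then [i - 1] else []

def liftLevel (r : Fin 3 → G) : ℕ → Perm (Fin 4) → G
  | 0 => fun _ => 1
  | k + 1 => fun σ => wordProd r (cosetWord (k + 1) (σ (k + 1 : ℕ))) *
      liftLevel r k ((wordProd adj (cosetWord (k + 1) (σ (k + 1 : ℕ))))⁻¹ * σ)

lemma adj_mul_cosetWord : ∀ k < 3, ∀ i : Fin 3, i.val ≤ k → ∀ a : Fin 4, a.val ≤ k + 1 →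
    (wordProd adj (cosetWord (k + 1) (adj i a)))⁻¹ * adj i =
      wordProd adj (carry i a) * (wordProd adj (cosetWord (k + 1) a))⁻¹ := by
  decide

lemma carry_eq : ∀ k < 3, ∀ i : Fin 3, i.val ≤ k → ∀ a : Fin 4, a.val ≤ k + 1 →
    carry i a = [] ∨ ∃ m : Fin 3, m.val < k ∧ carry i a = [m] := by
  decide

lemma cosetWord_apply : ∀ k < 3, ∀ a : Fin 4, a.val ≤ k + 1 →
    wordProd adj (cosetWord (k + 1) a) (k + 1 : ℕ) = a ∧
      ∀ q : Fin 4, k + 1 < q.val → wordProd adj (cosetWord (k + 1) a) q = q := by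
  decide

lemma liftLevel_one (r : Fin 3 → G) : liftLevel r 3 1 = 1 := by
  simp [liftLevel, cosetWord, wordProd]

end CoxeterA3

namespace IsCoxeterA3

open CoxeterA3

lemma mul_cosetWord (hr : IsCoxeterA3 r) : ∀ k < 3, ∀ i : Fin 3, i.val ≤ k →
    ∀ a : Fin 4, a.val ≤ k + 1 →
    wordProd r (cosetWord (k + 1) (adj i a)) * wordProd r (carry i a) =
      r i * wordProd r (cosetWord (k + 1) a) := by
  intro k hk i hi a ha
  have mul_self : ∀ i x, r i * (r i * x) = x := fun i x => by
    rw [← mul_assoc, hr.mul_self, one_mul]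
  have braid₀₁ : ∀ x, r 0 * (r 1 * (r 0 * x)) = r 1 * (r 0 * (r 1 * x)) := fun x => by
    simp only [← mul_assoc, hr.braid₀₁]
  have braid₁₂ : ∀ x, r 1 * (r 2 * (r 1 * x)) = r 2 * (r 1 * (r 2 * x)) := fun x => by
    simp only [← mul_assoc, hr.braid₁₂]
  have comm₀₂ : ∀ x, r 2 * (r 0 * x) = r 0 * (r 2 * x) := fun x => by
    simp only [← mul_assoc, hr.comm₀₂]
  interval_cases k <;> fin_cases i <;> fin_cases a <;>
    simp [wordProd, cosetWord, carry, adj, swap_apply_of_ne_of_ne, hr.mul_self, mul_self, mul_assoc,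
      braid₀₁, braid₁₂, comm₀₂, hr.comm₀₂.symm,
      (by simpa only [mul_assoc] using hr.braid₀₁ : r 0 * (r 1 * r 0) = _),
      (by simpa only [mul_assoc] using hr.braid₁₂ : r 1 * (r 2 * r 1) = _)] at *

lemma liftLevel_adj_mul (hr : IsCoxeterA3 r) {k : ℕ} (hk : k ≤ 3) {i : Fin 3}
    (hi : i.val < k) {σ : Perm (Fin 4)} (hσ : ∀ q : Fin 4, k < q.val → σ q = q) :
    liftLevel r k (adj i * σ) = r i * liftLevel r k σ := by
  induction k generalizing i σ with
  | zero => omega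
  | succ k ih =>
    have hpivot : (((k + 1 : ℕ) : Fin 4)).val = k + 1 := Fin.val_cast_of_lt (by omega)
    set a := σ (k + 1 : ℕ) with ha_def
    have ha : a.val ≤ k + 1 := by
      by_contra! h
      have := congrArg Fin.val (σ.injective ((hσ a h).trans ha_def))
      omega
    obtain ⟨hP, hPfix⟩ := cosetWord_apply k (by omega) a ha
    set P := wordProd adj (cosetWord (k + 1) a)
    have hτ : ∀ q : Fin 4, k < q.val → (P⁻¹ * σ) q = q := by
      intro q hq
      rw [Perm.mul_apply, Perm.inv_eq_iff_eq]
      rcases Nat.lt_or_ge (k + 1) q.val with h | h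
      · rw [hσ q (by omega), hPfix q h]
      · rw [show q = ((k + 1 : ℕ) : Fin 4) by ext; omega, hP]
    have hcarry : liftLevel r k (wordProd adj (carry i a) * (P⁻¹ * σ)) =
        wordProd r (carry i a) * liftLevel r k (P⁻¹ * σ) := by
      rcases carry_eq k (by omega) i (by omega) a ha with hc | ⟨m, hm, hc⟩
      · simp [hc, wordProd]
      · simpa [hc, wordProd] using ih (by omega) hm hτ
    simp only [liftLevel, Perm.mul_apply]
    rw [← ha_def, ← mul_assoc _ (adj i) σ, adj_mul_cosetWord k (by omega) i (by omega) a ha,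
      mul_assoc, hcarry, ← mul_assoc, hr.mul_cosetWord k (by omega) i (by omega) a ha, mul_assoc]

def lift (hr : IsCoxeterA3 r) : Perm (Fin 4) →* G :=
  MonoidHom.mk' (liftLevel r 3) fun σ τ => by
    induction σ using Submonoid.induction_of_closure_eq_top_left closure_range_adj with
    | one => rw [one_mul, liftLevel_one r, one_mul]
    | mul_left _ hx σ ih =>
      obtain ⟨i, rfl⟩ := hx
      rw [mul_assoc, hr.liftLevel_adj_mul le_rfl i.2 (by omega),
        hr.liftLevel_adj_mul le_rfl i.2 (by omega), ih, mul_assoc]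

lemma lift_adj (hr : IsCoxeterA3 r) (i : Fin 3) : hr.lift (adj i) = r i := by
  change liftLevel r 3 (adj i) = r i
  simpa [liftLevel_one r] using hr.liftLevel_adj_mul le_rfl i.2 (σ := 1) (by omega)

end IsCoxeterA3

end CoxeterPresentation

abbrev Z2 := Multiplicative (ℤ × ℤ)

section Z2

variable {T : Type*} [Group T]

def zpowPairHom {u v : T} (h : Commute u v) : Z2 →* T :=
  MonoidHom.mk' (fun x => u ^ (Multiplicative.toAdd x).1 * v ^ (Multiplicative.toAdd x).2)
    fun x y => by
      simp only [toAdd_mul, Prod.fst_add, Prod.snd_add, zpow_add, mul_assoc]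
      rw [← mul_assoc (u ^ (Multiplicative.toAdd y).1), (h.zpow_zpow _ _).eq, mul_assoc]

@[simp]
lemma zpowPairHom_ofAdd {u v : T} (h : Commute u v) (a b : ℤ) :
    zpowPairHom h (Multiplicative.ofAdd (a, b)) = u ^ a * v ^ b := rfl

lemma Z2.hom_ext {f g : Z2 →* T} (h₁ : f (.ofAdd (1, 0)) = g (.ofAdd (1, 0)))
    (h₂ : f (.ofAdd (0, 1)) = g (.ofAdd (0, 1))) : f = g := by
  refine MonoidHom.ext fun x => ?_
  have hx : x = .ofAdd (1, 0) ^ (Multiplicative.toAdd x).1 *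
      .ofAdd (0, 1) ^ (Multiplicative.toAdd x).2 := by
    simp [← ofAdd_zsmul, ← ofAdd_add]
  rw [hx, map_mul, map_mul, map_zpow, map_zpow, map_zpow, map_zpow, h₁, h₂]

end Z2

noncomputable def SemidirectProduct.kerEquivOfMulEquiv {G N H : Type*} [Group G] [Group N]
    [Group H] {φ : H →* MulAut N} (e : G ≃* N ⋊[φ] H) :
    (SemidirectProduct.rightHom.comp (e : G →* N ⋊[φ] H)).ker ≃* N :=
  (MulEquiv.subgroupCongr (by
      rw [← MonoidHom.comap_ker, ← SemidirectProduct.range_inl_eq_ker_rightHom,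
        Subgroup.comap_equiv_eq_map_symm])).trans
    ((e.symm.subgroupMap _).symm.trans
      (MonoidHom.ofInjective SemidirectProduct.inl_injective).symm)

namespace VTG

open scoped commutatorElement

section Relations

variable {n : ℕ}

def s (i : Fin (n - 1)) : VT n := PresentedGroup.of (Sum.inl i)

def ρ (i : Fin (n - 1)) : VT n := PresentedGroup.of (Sum.inr i)

structure VTRelations {H : Type*} [Group H] (a b : Fin (n - 1) → H) : Prop where
  a_mul_self : ∀ i, a i * a i = 1
  commute_a_a : ∀ i j : Fin (n - 1), (i : ℕ) + 2 ≤ j → Commute (a i) (a j)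
  b_mul_self : ∀ i, b i * b i = 1
  commute_b_b : ∀ i j : Fin (n - 1), (i : ℕ) + 2 ≤ j → Commute (b i) (b j)
  braid_b : ∀ i j : Fin (n - 1), (j : ℕ) = i + 1 → b i * b j * b i = b j * b i * b j
  commute_b_a : ∀ i j : Fin (n - 1), (i : ℕ) + 2 ≤ j → Commute (b i) (a j)
  commute_a_b : ∀ i j : Fin (n - 1), (i : ℕ) + 2 ≤ j → Commute (a i) (b j)
  mixed_braid : ∀ i j : Fin (n - 1), (j : ℕ) = i + 1 → b i * b j * a i = a j * b i * b j

lemma vtRelations_s_ρ : VTRelations (s (n := n)) ρ := by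
  have rel : ∀ w ∈ vtRels n, PresentedGroup.mk (vtRels n) w = 1 :=
    fun _ => PresentedGroup.one_of_mem
  have comm : ∀ x y : FreeGroup (Gen n), ⁅x, y⁆ ∈ vtRels n →
      Commute (PresentedGroup.mk (vtRels n) x) (PresentedGroup.mk (vtRels n) y) := fun x y h => by
    rw [← commutatorElement_eq_one_iff_commute, ← map_commutatorElement]
    exact rel _ h
  have eq : ∀ x y : FreeGroup (Gen n), x * y⁻¹ ∈ vtRels n →
      PresentedGroup.mk (vtRels n) x = PresentedGroup.mk (vtRels n) y :=
    fun _ _ => PresentedGroup.mk_eq_mk_of_mul_inv_mem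
  refine ⟨fun i => ?_, fun i j h => comm _ _ ?_, fun i => ?_, fun i j h => comm _ _ ?_,
    fun i j h => eq _ _ ?_, fun i j h => comm _ _ ?_, fun i j h => comm _ _ ?_,
    fun i j h => eq _ _ ?_⟩
  · exact (map_mul _ _ _).symm.trans (rel _ (Or.inl ⟨i, rfl⟩))
  · exact Or.inr (Or.inl ⟨i, j, h, rfl⟩)
  · exact (map_mul _ _ _).symm.trans (rel _ (Or.inr (Or.inr (Or.inl ⟨i, rfl⟩))))
  · exact Or.inr (Or.inr (Or.inr (Or.inl ⟨i, j, h, rfl⟩)))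
  · exact Or.inr (Or.inr (Or.inr (Or.inr (Or.inl ⟨i, j, h, rfl⟩))))
  · exact Or.inr (Or.inr (Or.inr (Or.inr (Or.inr (Or.inl ⟨i, j, h, Or.inl rfl⟩)))))
  · exact Or.inr (Or.inr (Or.inr (Or.inr (Or.inr (Or.inl ⟨i, j, h, Or.inr rfl⟩)))))
  · exact Or.inr (Or.inr (Or.inr (Or.inr (Or.inr (Or.inr ⟨i, j, h, rfl⟩)))))

variable {H : Type*} [Group H] {a b : Fin (n - 1) → H}

def VTRelations.lift (h : VTRelations a b) : VT n →* H :=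
  PresentedGroup.toGroup (f := Sum.elim a b) <| by
    have comm : ∀ x y : H, Commute x y → ⁅x, y⁆ = 1 :=
      fun _ _ => commutatorElement_eq_one_iff_commute.2
    rintro w (⟨i, rfl⟩ | ⟨i, j, hij, rfl⟩ | ⟨i, rfl⟩ | ⟨i, j, hij, rfl⟩ |
      ⟨i, j, hij, rfl⟩ | ⟨i, j, hij, (rfl | rfl)⟩ | ⟨i, j, hij, rfl⟩)
    · simpa [fs] using h.a_mul_self i
    · simpa [fs, map_commutatorElement] using comm _ _ (h.commute_a_a i j hij)
    · simpa [fr] using h.b_mul_self i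
    · simpa [fr, map_commutatorElement] using comm _ _ (h.commute_b_b i j hij)
    · rw [map_mul, map_inv, mul_inv_eq_one]
      simpa [fr] using h.braid_b i j hij
    · simpa [fr, fs, map_commutatorElement] using comm _ _ (h.commute_b_a i j hij)
    · simpa [fr, fs, map_commutatorElement] using comm _ _ (h.commute_a_b i j hij)
    · rw [map_mul, map_inv, mul_inv_eq_one]
      simpa [fr, fs] using h.mixed_braid i j hij

@[simp]
lemma VTRelations.lift_s (h : VTRelations a b) (i : Fin (n - 1)) : h.lift (s i) = a i :=
  PresentedGroup.toGroup.of _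

@[simp]
lemma VTRelations.lift_ρ (h : VTRelations a b) (i : Fin (n - 1)) : h.lift (ρ i) = b i :=
  PresentedGroup.toGroup.of _

lemma VTRelations.a_eq_conj (h : VTRelations a b) (i j : Fin (n - 1)) (hij : (j : ℕ) = i + 1) :
    a j = (b i * b j) * a i * (b i * b j)⁻¹ := by
  rw [h.mixed_braid i j hij]
  group

lemma perm_s (i : Fin (n - 1)) : perm n (s i) = tr i := PresentedGroup.toGroup.of _

lemma perm_ρ (i : Fin (n - 1)) : perm n (ρ i) = tr i := PresentedGroup.toGroup.of _

end Relations

/-- A `def` rather than an `abbrev`: the nested `Monoid.Coprod` reaches its group structure along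
two paths that agree only up to unfolding, which defeats `simp`. -/
def K := Coprod (Coprod Z2 Z2) Z2

instance : Group K := inferInstanceAs (Group (Coprod (Coprod Z2 Z2) Z2))

namespace K

def factor : Fin 3 → Z2 →* K :=
  ![Coprod.inl.comp Coprod.inl, Coprod.inl.comp Coprod.inr, Coprod.inr]

def lift {T : Type*} [Monoid T] (f : Fin 3 → Z2 →* T) : K →* T :=
  Coprod.lift (Coprod.lift (f 0) (f 1)) (f 2)

@[simp]
lemma lift_factor {T : Type*} [Monoid T] (f : Fin 3 → Z2 →* T) (m : Fin 3) (x : Z2) :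
    lift f (factor m x) = f m x := by
  fin_cases m
  · exact (Coprod.lift_apply_inl _ _ (Coprod.inl x)).trans (Coprod.lift_apply_inl _ _ x)
  · exact (Coprod.lift_apply_inl _ _ (Coprod.inr x)).trans (Coprod.lift_apply_inr _ _ x)
  · exact Coprod.lift_apply_inr _ _ x

lemma hom_ext {T : Type*} [Monoid T] {f g : K →* T}
    (h : ∀ m, f.comp (factor m) = g.comp (factor m)) : f = g :=
  Coprod.hom_ext (Coprod.hom_ext (h 0) (h 1)) (h 2)

/-- The factor of `K` containing `λᵢⱼ`: the three factors correspond to the three ways of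
splitting `{0, 1, 2, 3}` into two pairs. -/
def pairFactor (i j : Fin 4) : Fin 3 :=
  ![![0, 0, 1, 2], ![0, 0, 2, 1], ![1, 2, 0, 0], ![2, 1, 0, 0]] i j

lemma pairFactor_comm : ∀ i j, pairFactor i j = pairFactor j i := by decide

lemma pairFactor_perm : ∀ σ : Perm (Fin 4),
    pairFactor (σ 0) (σ 1) = pairFactor (σ 2) (σ 3) ∧
    pairFactor (σ 0) (σ 2) = pairFactor (σ 1) (σ 3) ∧
    pairFactor (σ 0) (σ 3) = pairFactor (σ 1) (σ 2) := by
  decide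

/-- `λᵢⱼ` for `i < j`: in its factor, the pair containing `0` is the first generator. -/
def gen (i j : Fin 4) : K :=
  factor (pairFactor i j) (.ofAdd (if i = 0 then (1, 0) else (0, 1)))

def lam (i j : Fin 4) : K :=
  if i < j then gen i j else if j < i then (gen j i)⁻¹ else 1

lemma lam_of_lt {i j : Fin 4} (h : i < j) : lam i j = gen i j := if_pos h

lemma lam_swap (i j : Fin 4) : lam j i = (lam i j)⁻¹ := by
  rcases lt_trichotomy i j with h | rfl | h
  · simp [lam, h, h.not_gt]
  · simp [lam]
  · simp only [lam, h, h.not_gt, if_false, if_true]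
    exact (inv_inv (gen j i)).symm

lemma lam_mem_range_factor (i j : Fin 4) : lam i j ∈ Set.range (factor (pairFactor i j)) := by
  rcases lt_trichotomy i j with h | rfl | h
  · exact ⟨.ofAdd (if i = 0 then (1, 0) else (0, 1)), by simp [lam, gen, h]⟩
  · exact ⟨1, by simp [lam]⟩
  · refine ⟨(.ofAdd (if j = 0 then (1, 0) else (0, 1)))⁻¹, ?_⟩
    simp only [map_inv, lam, gen, h, h.not_gt, if_false, if_true, pairFactor_comm i j]

lemma commute_lam {i j k l : Fin 4} (h : pairFactor i j = pairFactor k l) :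
    Commute (lam i j) (lam k l) := by
  obtain ⟨x, hx⟩ := lam_mem_range_factor i j
  obtain ⟨y, hy⟩ := lam_mem_range_factor k l
  rw [← hx, ← hy, h]
  exact (Commute.all x y).map _

lemma hom_ext_lam {T : Type*} [Group T] {f g : K →* T}
    (h : ∀ i j, f (lam i j) = g (lam i j)) : f = g := by
  refine hom_ext fun m => ?_
  fin_cases m <;> refine Z2.hom_ext ?_ ?_
  · simpa [lam, gen, pairFactor] using h 0 1
  · simpa [lam, gen, pairFactor] using h 2 3
  · simpa [lam, gen, pairFactor] using h 0 2
  · simpa [lam, gen, pairFactor] using h 1 3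
  · simpa [lam, gen, pairFactor] using h 0 3
  · simpa [lam, gen, pairFactor] using h 1 2

lemma hom_ext_perm {T : Type*} [Group T] {f g : K →* T}
    (h : ∀ σ : Perm (Fin 4), f (lam (σ 0) (σ 1)) = g (lam (σ 0) (σ 1))) : f = g := by
  refine hom_ext_lam fun i j => ?_
  by_cases hij : i = j
  · simp [hij, lam]
  obtain ⟨σ, rfl, rfl⟩ : ∃ σ : Perm (Fin 4), σ 0 = i ∧ σ 1 = j := by revert i j; decide
  exact h σ

def permActHom (σ : Perm (Fin 4)) : K →* K :=
  lift ![zpowPairHom (commute_lam (pairFactor_perm σ).1),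
    zpowPairHom (commute_lam (pairFactor_perm σ).2.1),
    zpowPairHom (commute_lam (pairFactor_perm σ).2.2)]

lemma permActHom_gen (σ : Perm (Fin 4)) {i j : Fin 4} (h : i < j) :
    permActHom σ (gen i j) = lam (σ i) (σ j) := by
  fin_cases i <;> fin_cases j <;> simp_all [gen, pairFactor, permActHom]

lemma permActHom_lam (σ : Perm (Fin 4)) (i j : Fin 4) :
    permActHom σ (lam i j) = lam (σ i) (σ j) := by
  rcases lt_trichotomy i j with h | rfl | h
  · rw [lam_of_lt h, permActHom_gen σ h]
  · simp [lam]
  · rw [lam_swap, lam_of_lt h, map_inv (permActHom σ) (gen j i), permActHom_gen σ h, lam_swap]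
    exact inv_inv (lam (σ i) (σ j))

instance : MulDistribMulAction (Perm (Fin 4)) K where
  smul σ := permActHom σ
  one_smul := DFunLike.congr_fun <|
    hom_ext_lam (T := K) (f := permActHom 1) (g := MonoidHom.id K) fun i j => by
      simp [permActHom_lam]
  mul_smul σ τ := DFunLike.congr_fun <|
    hom_ext_lam (T := K) (f := permActHom (σ * τ)) (g := (permActHom σ).comp (permActHom τ))
      fun i j => by simp [permActHom_lam]
  smul_mul σ := map_mul (permActHom σ)
  smul_one σ := map_one (permActHom σ)

lemma smul_lam (σ : Perm (Fin 4)) (i j : Fin 4) : σ • lam i j = lam (σ i) (σ j) :=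
  permActHom_lam σ i j

end K

open SemidirectProduct K

abbrev KS4 := K ⋊[MulDistribMulAction.toMulAut (Perm (Fin 4)) K] Perm (Fin 4)

lemma vtRelations_toKS4 : VTRelations (n := 4)
    (fun i : Fin 3 => (inl (lam i.castSucc i.succ) * inr (adj i) : KS4))
    (fun i => inr (adj i)) := by
  refine ⟨fun i => ?_, fun i j h => ?_, fun i => ?_, fun i j h => ?_, fun i j h => ?_,
    fun i j h => ?_, fun i j h => ?_, fun i j h => ?_⟩
  all_goals (try fin_cases i) <;> (try fin_cases j) <;> (try simp at h) <;>
    apply SemidirectProduct.ext <;>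
    simp [smul_lam, adj, swap_apply_of_ne_of_ne, lam_swap 0 1, lam_swap 1 2, lam_swap 2 3]
  all_goals first | decide | exact (commute_lam (by decide)).eq

def toKS4 : VT 4 →* KS4 := vtRelations_toKS4.lift

lemma tr_eq_adj (i : Fin 3) : tr (n := 4) i = adj i := rfl

lemma perm_eq_rightHom_comp_toKS4 : perm 4 = rightHom.comp toKS4 := by
  refine PresentedGroup.ext fun x => ?_
  rcases x with i | i
  · change perm 4 (s i) = rightHom (toKS4 (s i))
    simp [perm_s, toKS4, tr_eq_adj]
  · change perm 4 (ρ i) = rightHom (toKS4 (ρ i))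
    simp [perm_ρ, toKS4, tr_eq_adj]

lemma isCoxeterA3_ρ : IsCoxeterA3 fun i : Fin 3 => ρ (n := 4) i :=
  have h := vtRelations_s_ρ (n := 4)
  ⟨h.b_mul_self, h.braid_b 0 1 rfl, h.braid_b 1 2 rfl, (h.commute_b_b 0 2 (by decide)).eq⟩

def ρLift : Perm (Fin 4) →* VT 4 := isCoxeterA3_ρ.lift

lemma ρLift_adj (i : Fin 3) : ρLift (adj i) = ρ i := isCoxeterA3_ρ.lift_adj i

lemma toKS4_comp_ρLift : toKS4.comp ρLift = inr :=
  MonoidHom.eq_of_eqOn_denseM closure_range_adj <| by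
    rintro _ ⟨i, rfl⟩
    simp [ρLift_adj, toKS4]

/-- `vtLam σ` is `λ_{σ 0, σ 1}`. -/
def vtLam (σ : Perm (Fin 4)) : VT 4 := ρLift σ * (s 0 * ρ 0) * (ρLift σ)⁻¹

lemma vtLam_one : vtLam 1 = s 0 * ρ 0 := by simp [vtLam]

lemma vtLam_mul (π σ : Perm (Fin 4)) : vtLam (π * σ) = ρLift π * vtLam σ * (ρLift π)⁻¹ := by
  simp only [vtLam, map_mul, mul_inv_rev]
  group

lemma commute_ρ_two_s_mul_ρ : Commute (ρ 2) (s 0 * ρ 0 : VT 4) :=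
  have h := vtRelations_s_ρ (n := 4)
  (h.commute_a_b 0 2 (by decide)).symm.mul_right (h.commute_b_b 0 2 (by decide)).symm

lemma eq_one_or_eq_adj_two_of_fixes :
    ∀ π : Perm (Fin 4), π 0 = 0 → π 1 = 1 → π = 1 ∨ π = adj 2 := by
  decide

lemma vtLam_congr {σ τ : Perm (Fin 4)} (h₀ : σ 0 = τ 0) (h₁ : σ 1 = τ 1) : vtLam σ = vtLam τ := by
  have key : vtLam (τ⁻¹ * σ) = vtLam 1 := by
    rcases eq_one_or_eq_adj_two_of_fixes (τ⁻¹ * σ) (by simp [h₀]) (by simp [h₁]) with h | h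
    · rw [h]
    · rw [h, vtLam, ρLift_adj, commute_ρ_two_s_mul_ρ.eq, vtLam_one, mul_inv_cancel_right]
  rw [← mul_inv_cancel_left τ σ, vtLam_mul, key, ← vtLam_mul, mul_one]

lemma vtLam_mul_adj_zero (σ : Perm (Fin 4)) : vtLam (σ * adj 0) = (vtLam σ)⁻¹ := by
  have h := vtRelations_s_ρ (n := 4)
  have hs : (s 0 : VT 4)⁻¹ = s 0 := inv_eq_of_mul_eq_one_left (h.a_mul_self 0)
  have hρ : (ρ 0 : VT 4)⁻¹ = ρ 0 := inv_eq_of_mul_eq_one_left (h.b_mul_self 0)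
  have h0 : vtLam (adj 0) = (vtLam 1)⁻¹ := by
    rw [vtLam, ρLift_adj, vtLam_one, ← mul_assoc, mul_inv_cancel_right, mul_inv_rev, hs, hρ]
  rw [vtLam_mul, h0]
  simp only [vtLam, map_one, one_mul, inv_one, mul_one]
  group

def sConjPerm : Fin 3 → Perm (Fin 4) := ![1, adj 0 * adj 1, adj 1 * adj 2 * (adj 0 * adj 1)]

lemma s_eq_conj_s_zero (i : Fin 3) :
    s i = ρLift (sConjPerm i) * s 0 * (ρLift (sConjPerm i))⁻¹ := by
  have h := vtRelations_s_ρ (n := 4)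
  fin_cases i
  · simp [sConjPerm]
  · simpa [sConjPerm, ρLift_adj] using h.a_eq_conj 0 1 rfl
  · have h₁ := h.a_eq_conj 0 1 rfl
    have h₂ := h.a_eq_conj 1 2 rfl
    simp only [sConjPerm, Fin.reduceFinMk, Matrix.cons_val, map_mul, ρLift_adj]
    rw [h₂, h₁]
    group

lemma vtLam_sConjPerm (i : Fin 3) : vtLam (sConjPerm i) = s i * ρ i := by
  have hconj : ∀ i : Fin 3, sConjPerm i * adj 0 * (sConjPerm i)⁻¹ = adj i := by decide
  calc vtLam (sConjPerm i)
      = (ρLift (sConjPerm i) * s 0 * (ρLift (sConjPerm i))⁻¹) *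
          ρLift (sConjPerm i * adj 0 * (sConjPerm i)⁻¹) := by
        simp only [vtLam, map_mul, map_inv, ρLift_adj]
        group
    _ = s i * ρ i := by rw [← s_eq_conj_s_zero, hconj, ρLift_adj]

lemma commute_vtLam_one_sConjPerm_two : Commute (vtLam 1) (vtLam (sConjPerm 2)) := by
  have h := vtRelations_s_ρ (n := 4)
  rw [vtLam_one, vtLam_sConjPerm]
  exact ((h.commute_a_a 0 2 (by decide)).mul_right (h.commute_a_b 0 2 (by decide))).mul_left
    ((h.commute_b_a 0 2 (by decide)).mul_right (h.commute_b_b 0 2 (by decide)))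

lemma commute_vtLam_mul_sConjPerm_two (β : Perm (Fin 4)) :
    Commute (vtLam β) (vtLam (β * sConjPerm 2)) := by
  have h := commute_vtLam_one_sConjPerm_two.map (MulAut.conj (ρLift β)).toMonoidHom
  rwa [MulEquiv.coe_toMonoidHom, MulAut.conj_apply, MulAut.conj_apply, ← vtLam_mul, ← vtLam_mul,
    mul_one] at h

/-- Factor `m` of `K` is generated by `λ_{β 0, β 1}` and `λ_{β 2, β 3}` for `β = factorPerm m`;
note that `sConjPerm 2 = (0 2)(1 3)`. -/
def factorPerm : Fin 3 → Perm (Fin 4) := ![1, adj 1, adj 2 * adj 1]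

def kToVT : K →* VT 4 :=
  K.lift fun m => zpowPairHom (commute_vtLam_mul_sConjPerm_two (factorPerm m))

lemma kToVT_lam (σ : Perm (Fin 4)) : kToVT (lam (σ 0) (σ 1)) = vtLam σ := by
  have base : ∀ m : Fin 3, ∀ τ ∈ [factorPerm m, factorPerm m * sConjPerm 2],
      kToVT (lam (τ 0) (τ 1)) = vtLam τ := by
    intro m
    fin_cases m <;>
      simp [kToVT, factorPerm, sConjPerm, lam, gen, pairFactor, adj, swap_apply_of_ne_of_ne]
  obtain ⟨m, τ, hτ, h | h⟩ : ∃ m : Fin 3, ∃ τ ∈ [factorPerm m, factorPerm m * sConjPerm 2],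
      (σ 0 = τ 0 ∧ σ 1 = τ 1) ∨ (σ 0 = τ 1 ∧ σ 1 = τ 0) := by
    revert σ; decide
  · rw [h.1, h.2, base m τ hτ, vtLam_congr h.1 h.2]
  · rw [h.1, h.2, lam_swap, map_inv, base m τ hτ, ← vtLam_mul_adj_zero]
    exact vtLam_congr (by simp [adj, h.1]) (by simp [adj, h.2])

lemma kToVT_smul (g : Perm (Fin 4)) (x : K) :
    kToVT (g • x) = ρLift g * kToVT x * (ρLift g)⁻¹ := by
  have : kToVT.comp (MulDistribMulAction.toMonoidHom K g) =
      (MulAut.conj (ρLift g)).toMonoidHom.comp kToVT :=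
    K.hom_ext_perm fun σ => by
      simp only [MonoidHom.comp_apply, MulDistribMulAction.toMonoidHom_apply, smul_lam,
        MulEquiv.coe_toMonoidHom, MulAut.conj_apply, kToVT_lam]
      rw [← Perm.mul_apply g σ 0, ← Perm.mul_apply g σ 1, kToVT_lam, vtLam_mul]
  exact DFunLike.congr_fun this x

def ofKS4 : KS4 →* VT 4 :=
  SemidirectProduct.lift kToVT ρLift fun g => MonoidHom.ext fun x => by simp [kToVT_smul]

lemma ofKS4_comp_toKS4 : ofKS4.comp toKS4 = MonoidHom.id (VT 4) := by
  have h := vtRelations_s_ρ (n := 4)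
  refine PresentedGroup.ext fun x => ?_
  rcases x with i | i
  · change ofKS4 (toKS4 (s i)) = s i
    have hi : sConjPerm i 0 = i.castSucc ∧ sConjPerm i 1 = i.succ := by revert i; decide
    simp only [toKS4, ofKS4, VTRelations.lift_s, map_mul, lift_inl, lift_inr, ρLift_adj]
    rw [← hi.1, ← hi.2, kToVT_lam, vtLam_sConjPerm, mul_assoc, h.b_mul_self, mul_one]
  · change ofKS4 (toKS4 (ρ i)) = ρ i
    simp [toKS4, ofKS4, ρLift_adj]

lemma toKS4_vtLam (σ : Perm (Fin 4)) : toKS4 (vtLam σ) = inl (lam (σ 0) (σ 1)) := by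
  have hρ : toKS4 (ρLift σ) = inr σ := DFunLike.congr_fun toKS4_comp_ρLift σ
  have h01 : toKS4 (s 0 * ρ 0) = inl (lam 0 1) := by
    simp only [toKS4, map_mul, VTRelations.lift_s, VTRelations.lift_ρ]
    rw [mul_assoc, ← map_mul, isCoxeterA3_adj.mul_self, map_one, mul_one]
    rfl
  rw [vtLam, map_mul, map_mul, map_inv, hρ, h01, ← map_inv, ← inl_aut]
  simp [smul_lam]

lemma toKS4_comp_ofKS4 : toKS4.comp ofKS4 = MonoidHom.id KS4 := by
  refine SemidirectProduct.hom_ext (K.hom_ext_perm fun σ => ?_) ?_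
  · simp [ofKS4, kToVT_lam, toKS4_vtLam]
  · rw [MonoidHom.comp_assoc, ofKS4, lift_comp_inr, toKS4_comp_ρLift, MonoidHom.id_comp]

def vtEquivKS4 : VT 4 ≃* KS4 :=
  toKS4.toMulEquiv ofKS4 ofKS4_comp_toKS4 toKS4_comp_ofKS4

/-- `PVT_4` is isomorphic to the free product `(ℤ × ℤ) * (ℤ × ℤ) * (ℤ × ℤ)`. -/
theorem pvt4_free_product :
    Nonempty ((perm 4).ker ≃*
      Monoid.Coprod (Monoid.Coprod (Multiplicative (ℤ × ℤ)) (Multiplicative (ℤ × ℤ)))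
        (Multiplicative (ℤ × ℤ))) := by
  rw [perm_eq_rightHom_comp_toKS4]
  exact ⟨(kerEquivOfMulEquiv vtEquivKS4).trans (MulEquiv.refl _)⟩

end VTG
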